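/- Let u be strictly convex and continuous on B₂(0) ⊆ ℝⁿ, and let u_k be convex functions converging to u uniformly on B₂(0). Fix p ∈ B₁(0) and 0 < δ < 1. Then there exists k₀ such that for all k ≥ k₀ and all 0 < r < 1, S^{u_k}_r(p) ⊆ S^u_{r+δ}(p), where S^v_r(p) = { x ∈ B₁(0) : v(x) < v(p) + sup_{y∈∂v(p)} (x−p)·y + r² }. -/

import Mathlib

open Metric Set Filter

/-- The subdifferential of `v` at `p`, with respect to the domain `B₂(0)`. -/
def subdiff {n : ℕ} (v : EuclideanSpace ℝ (Fin n) → ℝ) (p : EuclideanSpace ℝ (Fin n)) :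
    Set (EuclideanSpace ℝ (Fin n)) :=
  {y | ∀ x ∈ ball (0 : EuclideanSpace ℝ (Fin n)) 2, v p + (inner ℝ (x - p) y : ℝ) ≤ v x}

/-- The outer section `S^v_r(p)` defined via the subdifferential. -/
def outerSection {n : ℕ} (v : EuclideanSpace ℝ (Fin n) → ℝ) (r : ℝ)
    (p : EuclideanSpace ℝ (Fin n)) : Set (EuclideanSpace ℝ (Fin n)) :=
  {x ∈ ball (0 : EuclideanSpace ℝ (Fin n)) 1 |
    v x < v p + sSup ((fun y => (inner ℝ (x - p) y : ℝ)) '' subdiff v p) + r ^ 2}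


/-
The subgradients of `u_k` at `p` are uniformly bounded (`u_k` is uniformly bounded near `p`), and
once `|u_k - u| < η / 2` they are `η`-approximate subgradients of `u`. By compactness, bounded
`η`-approximate subgradients of `u` lie close to `∂u(p)` when `η` is small, so the support
function `sup_{∂u_k(p)} ⟪x - p, ·⟫` exceeds `sup_{∂u(p)} ⟪x - p, ·⟫` by at most `δ² / 2`.
Together with `|u_k - u| < δ² / 4` this gives the inclusion, as `r² + δ² < (r + δ)²`.
-/

open scoped Topology

section Subgradient

variable {E : Type*} [NormedAddCommGroup E]

theorem ConvexOn.exists_strongDual_add_le [NormedSpace ℝ E] {s : Set E} {f : E → ℝ}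
    (hf : ConvexOn ℝ s f) (hfc : ContinuousOn f s) (hs : IsOpen s) {p : E} (hp : p ∈ s) :
    ∃ φ : StrongDual ℝ E, ∀ x ∈ s, f p + φ (x - p) ≤ f x := by
  set epi : Set (E × ℝ) := {q | q.1 ∈ s ∧ f q.1 < q.2}
  have hepi_open : IsOpen epi := by
    have h : IsOpen (Prod.fst ⁻¹' s ∩ (fun q : E × ℝ => f q.1 - q.2) ⁻¹' Iio 0) :=
      ((hfc.comp continuousOn_fst fun q hq => hq).sub continuousOn_snd).isOpen_inter_preimage
        (hs.preimage continuous_fst) isOpen_Iio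
    simpa only [Set.inter_def, mem_preimage, mem_Iio, sub_neg] using h
  obtain ⟨Λ, hΛ⟩ := geometric_hahn_banach_open_point hf.convex_strict_epigraph hepi_open
    (fun h => lt_irrefl _ h.2 : (p, f p) ∉ epi)
  set φ : StrongDual ℝ E := Λ.comp (ContinuousLinearMap.inl ℝ E ℝ)
  set c : ℝ := Λ (0, 1)
  have hΛ_apply : ∀ x t, Λ (x, t) = φ x + t * c := fun x t => by
    rw [show (x, t) = (x, (0 : ℝ)) + t • ((0 : E), (1 : ℝ)) by simp, map_add, map_smul, smul_eq_mul]
    rfl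
  have hlt : ∀ x ∈ s, ∀ t, f x < t → φ x + t * c < φ p + f p * c := fun x hx t ht => by
    simpa only [hΛ_apply] using hΛ (x, t) ⟨hx, ht⟩
  have hc : c < 0 := by nlinarith [hlt p hp (f p + 1) (by linarith)]
  refine ⟨(-c)⁻¹ • φ, fun x hx => ?_⟩
  -- letting `t ↓ f x` in `hlt`
  have hle : φ x + f x * c ≤ φ p + f p * c := le_of_forall_pos_lt_add fun ε hε => by
    have := hlt x hx (f x + ε / -c) (by linarith [div_pos hε (neg_pos.2 hc)])
    rw [add_mul, div_mul_eq_mul_div, div_neg, mul_div_cancel_right₀ _ hc.ne] at this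
    linarith
  have : (-c)⁻¹ * (φ x - φ p) ≤ f x - f p := by
    rw [inv_mul_le_iff₀ (neg_pos.2 hc)]
    linarith
  rw [smul_apply, map_sub, smul_eq_mul]
  linarith

variable [InnerProductSpace ℝ E]

theorem ConvexOn.exists_add_inner_le [CompleteSpace E] {s : Set E} {f : E → ℝ}
    (hf : ConvexOn ℝ s f) (hfc : ContinuousOn f s) (hs : IsOpen s) {p : E} (hp : p ∈ s) :
    ∃ y : E, ∀ x ∈ s, f p + inner ℝ (x - p) y ≤ f x := by
  obtain ⟨φ, hφ⟩ := hf.exists_strongDual_add_le hfc hs hp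
  refine ⟨(InnerProductSpace.toDual ℝ E).symm φ, fun x hx => ?_⟩
  rw [real_inner_comm, InnerProductSpace.toDual_symm_apply]
  exact hφ x hx

theorem mul_norm_le_of_forall_add_inner_le {f : E → ℝ} {p y : E} {ρ C : ℝ} (hρ : 0 < ρ)
    (hy : ∀ x ∈ closedBall p ρ, f p + inner ℝ (x - p) y ≤ f x)
    (hf : ∀ x ∈ closedBall p ρ, f x - f p ≤ C) : ρ * ‖y‖ ≤ C := by
  rcases eq_or_ne y 0 with rfl | hy0
  · simpa using hf p (mem_closedBall_self hρ.le)
  set x := p + (ρ / ‖y‖) • y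
  have hxp : x - p = (ρ / ‖y‖) • y := add_sub_cancel_left _ _
  have hx : x ∈ closedBall p ρ := by
    rw [mem_closedBall, dist_eq_norm, hxp, norm_smul, Real.norm_eq_abs,
      abs_of_pos (by positivity), div_mul_cancel₀ _ (norm_ne_zero_iff.2 hy0)]
  have hinner : inner ℝ (x - p) y = ρ * ‖y‖ := by
    rw [hxp, real_inner_smul_left, real_inner_self_eq_norm_sq]
    field_simp
  linarith [hy x hx, hf x hx]

theorem csSup_image_inner_le_add {A B : Set E} (z : E) {ε : ℝ} (hA : A.Nonempty)
    (hB : BddAbove ((fun y => inner ℝ z y) '' B))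
    (hAB : ∀ y ∈ A, ∃ y₀ ∈ B, ‖y - y₀‖ ≤ ε) :
    sSup ((fun y => inner ℝ z y) '' A) ≤ sSup ((fun y => inner ℝ z y) '' B) + ‖z‖ * ε := by
  refine csSup_le (hA.image _) (forall_mem_image.2 fun y hy => ?_)
  obtain ⟨y₀, hy₀, hyy₀⟩ := hAB y hy
  calc inner ℝ z y = inner ℝ z y₀ + inner ℝ z (y - y₀) := by rw [inner_sub_right]; ring
    _ ≤ sSup ((fun y => inner ℝ z y) '' B) + ‖z‖ * ε := by
      gcongr
      · exact le_csSup hB (mem_image_of_mem _ hy₀)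
      · exact (real_inner_le_norm z _).trans (by gcongr)

theorem exists_pos_forall_approx_subgradient_near [ProperSpace E] (s : Set E) (f : E → ℝ) (p : E)
    (R : ℝ) {ε : ℝ} (hε : 0 < ε) :
    ∃ η > 0, ∀ y : E, ‖y‖ ≤ R → (∀ x ∈ s, f p + inner ℝ (x - p) y ≤ f x + η) →
      ∃ y₀ : E, (∀ x ∈ s, f p + inner ℝ (x - p) y₀ ≤ f x) ∧ ‖y - y₀‖ ≤ ε := by
  by_contra! hbad
  choose y hyR hy_approx hy_far using fun m : ℕ => hbad (1 / (m + 1)) (by positivity)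
  obtain ⟨y₀, -, φ, hφ, hlim⟩ := (isCompact_closedBall (0 : E) R).tendsto_subseq
    (x := y) fun m => mem_closedBall_zero_iff.2 (hyR m)
  have hy₀ : ∀ x ∈ s, f p + inner ℝ (x - p) y₀ ≤ f x := fun x hx => by
    have hconv : Tendsto (fun m => f p + inner ℝ (x - p) (y (φ m)) - 1 / ((φ m : ℝ) + 1)) atTop
        (𝓝 (f p + inner ℝ (x - p) y₀ - 0)) :=
      (tendsto_const_nhds.add (tendsto_const_nhds.inner hlim)).sub
        (tendsto_one_div_add_atTop_nhds_zero_nat.comp hφ.tendsto_atTop)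
    rw [sub_zero] at hconv
    exact le_of_tendsto' hconv fun m => by linarith [hy_approx (φ m) x hx]
  obtain ⟨m, hm⟩ := ((tendsto_iff_norm_sub_tendsto_zero.1 hlim).eventually
    (gt_mem_nhds hε)).exists
  exact (hy_far (φ m) y₀ hy₀).not_ge hm.le

end Subgradient

section Subdiff

variable {n : ℕ}

theorem closedBall_half_subset_ball_two {p : EuclideanSpace ℝ (Fin n)} (hp : p ∈ ball 0 1) :
    closedBall p (1 / 2) ⊆ ball 0 2 :=
  closedBall_subset_ball' (by rw [mem_ball] at hp; linarith)

theorem norm_le_of_mem_subdiff {v : EuclideanSpace ℝ (Fin n) → ℝ} {p y : EuclideanSpace ℝ (Fin n)}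
    (hp : p ∈ ball 0 1) {C : ℝ} (hC : ∀ x ∈ closedBall p (1 / 2), |v x| ≤ C)
    (hy : y ∈ subdiff v p) : ‖y‖ ≤ 4 * C := by
  have hsub := closedBall_half_subset_ball_two hp
  have := mul_norm_le_of_forall_add_inner_le (C := 2 * C) one_half_pos
    (fun x hx => hy x (hsub hx)) fun x hx => by
      linarith [abs_le.1 (hC x hx), abs_le.1 (hC p (mem_closedBall_self one_half_pos.le))]
  linarith

theorem exists_pos_forall_sSup_inner_subdiff_le {u : EuclideanSpace ℝ (Fin n) → ℝ}
    (hu : ContinuousOn u (ball 0 2)) {p : EuclideanSpace ℝ (Fin n)} (hp : p ∈ ball 0 1)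
    {ε : ℝ} (hε : 0 < ε) :
    ∃ θ > 0, ∀ v : EuclideanSpace ℝ (Fin n) → ℝ, (subdiff v p).Nonempty →
      (∀ z ∈ ball 0 2, |u z - v z| < θ) → ∀ x ∈ ball 0 1,
        sSup ((fun y => inner ℝ (x - p) y) '' subdiff v p) ≤
          sSup ((fun y => inner ℝ (x - p) y) '' subdiff u p) + ε := by
  have hsub := closedBall_half_subset_ball_two hp
  have hp₂ : p ∈ ball (0 : EuclideanSpace ℝ (Fin n)) 2 := hsub (mem_closedBall_self one_half_pos.le)
  obtain ⟨M, hM⟩ := (isCompact_closedBall p (1 / 2)).exists_bound_of_continuousOn (hu.mono hsub)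
  simp only [Real.norm_eq_abs] at hM
  obtain ⟨η, hη, hnear⟩ := exists_pos_forall_approx_subgradient_near (ball 0 2) u p
    (4 * (M + 1)) (half_pos hε)
  refine ⟨min 1 (η / 2), by positivity, fun v hv huv x hx => ?_⟩
  have huv₁ : ∀ z ∈ ball 0 2, |u z - v z| < 1 := fun z hz => (huv z hz).trans_le (min_le_left _ _)
  have huvη : ∀ z ∈ ball 0 2, |u z - v z| < η / 2 :=
    fun z hz => (huv z hz).trans_le (min_le_right _ _)
  have hv_near : ∀ y ∈ subdiff v p, ∃ y₀ ∈ subdiff u p, ‖y - y₀‖ ≤ ε / 2 := fun y hy => by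
    refine hnear y (norm_le_of_mem_subdiff hp (fun z hz => ?_) hy) fun z hz => ?_
    · have := abs_sub_abs_le_abs_sub (v z) (u z)
      rw [abs_sub_comm] at this
      linarith [hM z hz, huv₁ z (hsub hz)]
    · linarith [hy z hz, abs_lt.1 (huvη z hz), abs_lt.1 (huvη p hp₂)]
  have hbdd : BddAbove ((fun y => inner ℝ (x - p) y) '' subdiff u p) := by
    refine ⟨‖x - p‖ * (4 * M), forall_mem_image.2 fun y hy => ?_⟩
    exact (real_inner_le_norm _ _).trans
      (by gcongr; exact norm_le_of_mem_subdiff hp hM hy)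
  have hxp : ‖x - p‖ < 2 := by
    rw [← dist_eq_norm]
    linarith [dist_triangle x 0 p, mem_ball.1 hx, mem_ball'.1 hp]
  calc _ ≤ sSup ((fun y => inner ℝ (x - p) y) '' subdiff u p) + ‖x - p‖ * (ε / 2) :=
        csSup_image_inner_le_add (x - p) hv hbdd hv_near
    _ ≤ _ := by nlinarith

end Subdiff

theorem section_stability_general {n : ℕ}
    (u : EuclideanSpace ℝ (Fin n) → ℝ)
    (hc : ContinuousOn u (ball 0 2))
    (uk : ℕ → EuclideanSpace ℝ (Fin n) → ℝ)
    (hconv : ∀ k, ConvexOn ℝ (ball 0 2) (uk k))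
    (hunif : TendstoUniformlyOn uk u atTop (ball 0 2))
    (p : EuclideanSpace ℝ (Fin n)) (hp : p ∈ ball (0 : EuclideanSpace ℝ (Fin n)) 1)
    (δ : ℝ) (hδ0 : 0 < δ) :
    ∃ k₀ : ℕ, ∀ k ≥ k₀, ∀ r : ℝ, 0 < r → r < 1 →
      outerSection (uk k) r p ⊆ outerSection u (r + δ) p := by
  have hp₂ : p ∈ ball (0 : EuclideanSpace ℝ (Fin n)) 2 :=
    closedBall_half_subset_ball_two hp (mem_closedBall_self one_half_pos.le)
  obtain ⟨θ, hθ, hsSup⟩ := exists_pos_forall_sSup_inner_subdiff_le hc hp (half_pos (pow_pos hδ0 2))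
  obtain ⟨k₀, hk₀⟩ := eventually_atTop.1 (Metric.tendstoUniformlyOn_iff.1 hunif
    (min θ (δ ^ 2 / 4)) (by positivity))
  refine ⟨k₀, fun k hk r hr _ x ⟨hx, hxk⟩ => ⟨hx, ?_⟩⟩
  have hclose : ∀ z ∈ ball 0 2, |u z - uk k z| < min θ (δ ^ 2 / 4) := fun z hz => hk₀ k hk z hz
  have hS := hsSup (uk k) ((hconv k).exists_add_inner_le ((hconv k).continuousOn isOpen_ball)
    isOpen_ball hp₂) (fun z hz => (hclose z hz).trans_le (min_le_left _ _)) x hx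
  have hux := abs_lt.1 ((hclose x (ball_subset_ball one_le_two hx)).trans_le (min_le_right _ _))
  have hup := abs_lt.1 ((hclose p hp₂).trans_le (min_le_right _ _))
  have hsq : r ^ 2 + δ ^ 2 < (r + δ) ^ 2 := by nlinarith [mul_pos hr hδ0]
  linarith

/-- stability of sections under uniform convergence:
`S^{u_k}_r(p) ⊆ S^u_{r+δ}(p)` for all `k` large and all `0 < r < 1`. -/
theorem section_stability {n : ℕ}
    (u : EuclideanSpace ℝ (Fin n) → ℝ)
    (hu : StrictConvexOn ℝ (ball 0 2) u) (hc : ContinuousOn u (ball 0 2))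
    (uk : ℕ → EuclideanSpace ℝ (Fin n) → ℝ)
    (hconv : ∀ k, ConvexOn ℝ (ball 0 2) (uk k))
    (hunif : TendstoUniformlyOn uk u atTop (ball 0 2))
    (p : EuclideanSpace ℝ (Fin n)) (hp : p ∈ ball (0 : EuclideanSpace ℝ (Fin n)) 1)
    (δ : ℝ) (hδ0 : 0 < δ) (hδ1 : δ < 1) :
    ∃ k₀ : ℕ, ∀ k ≥ k₀, ∀ r : ℝ, 0 < r → r < 1 →
      outerSection (uk k) r p ⊆ outerSection u (r + δ) p :=
  section_stability_general u hc uk hconv hunif p hp δ hδ0
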